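/- Let p, γ ∈ ℝⁿ be linearly independent and define f(a) = ⟨p,a⟩/√(1+⟨γ,a⟩²) on the unit sphere. Then the minimizer of f over Sⁿ⁻¹ is a* = -((1+|γ|²)p - ⟨p,γ⟩γ)/√(|p|²(1+|γ|²)² - ⟨p,γ⟩²(2+|γ|²)). -/

import Mathlib

/-!
Write `P = |p|²`, `G = |γ|²`, `C = ⟨p, γ⟩`, `Δ = PG - C² > 0`, and for a unit vector `a` put
`u = ⟨p, a⟩`, `v = ⟨γ, a⟩`. Bessel's inequality for the projection of `a` onto `span {p, γ}` reads
`Gu² - 2Cuv + Pv² ≤ Δ`, and with the tilted Gram determinant `E = P(1 + G) - C²` (that of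
`(p, 0)` and `(γ, 1)`) the identity
`Δ (E(1 + v²) - (1 + G)u²) = (Cu - Ev)² + E (Δ - (Gu² - 2Cuv + Pv²))`
gives `f(a)² = u² / (1 + v²) ≤ E / (1 + G)`, so `f ≥ -√(E / (1 + G))` on the sphere, a value
attained at `a*`. Equality forces `Cu = Ev` and `a ∈ span {p, γ}`; together with `u < 0` this pins
down `(u, v)` and hence `a`.
-/

open Matrix Real

section DotProduct

variable {ι R : Type*} [Fintype ι] [Ring R] [LinearOrder R] [IsStrictOrderedRing R]

theorem dotProduct_self_nonneg (v : ι → R) : 0 ≤ v ⬝ᵥ v :=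
  Fintype.sum_nonneg fun i => mul_self_nonneg (v i)

theorem dotProduct_self_pos {v : ι → R} (hv : v ≠ 0) : 0 < v ⬝ᵥ v :=
  (dotProduct_self_nonneg v).lt_of_ne fun h => hv (dotProduct_self_eq_zero.1 h.symm)

end DotProduct

section Gram

variable {ι : Type*} [Fintype ι] (p γ a : ι → ℝ)

def gramDet : ℝ := (p ⬝ᵥ p) * (γ ⬝ᵥ γ) - (p ⬝ᵥ γ) ^ 2

def gramDet₃ : ℝ :=
  gramDet p γ * (a ⬝ᵥ a) -
    ((γ ⬝ᵥ γ) * (p ⬝ᵥ a) ^ 2 - 2 * (p ⬝ᵥ γ) * (p ⬝ᵥ a) * (γ ⬝ᵥ a) + (p ⬝ᵥ p) * (γ ⬝ᵥ a) ^ 2)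

/-- `gramDet p γ` times the component of `a` orthogonal to `span {p, γ}`. -/
def gramResidual : ι → ℝ :=
  gramDet p γ • a -
    (((γ ⬝ᵥ γ) * (p ⬝ᵥ a) - (p ⬝ᵥ γ) * (γ ⬝ᵥ a)) • p +
      ((p ⬝ᵥ p) * (γ ⬝ᵥ a) - (p ⬝ᵥ γ) * (p ⬝ᵥ a)) • γ)

theorem gramResidual_dotProduct_self :
    gramResidual p γ a ⬝ᵥ gramResidual p γ a = gramDet p γ * gramDet₃ p γ a := by
  simp only [gramResidual, gramDet₃, gramDet, sub_dotProduct, dotProduct_sub, add_dotProduct,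
    dotProduct_add, smul_dotProduct, dotProduct_smul, smul_eq_mul, dotProduct_comm a p,
    dotProduct_comm a γ, dotProduct_comm γ p]
  ring

variable {p γ a}

theorem gramDet_pos (h : LinearIndependent ℝ ![p, γ]) : 0 < gramDet p γ := by
  have hγ : 0 < γ ⬝ᵥ γ := dotProduct_self_pos (by simpa using h.ne_zero 1)
  have hw : (γ ⬝ᵥ γ) • p - (p ⬝ᵥ γ) • γ ≠ 0 := fun hw =>
    hγ.ne' (LinearIndependent.pair_iff.1 h _ (-(p ⬝ᵥ γ)) (by rwa [neg_smul, ← sub_eq_add_neg])).1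
  have hww : ((γ ⬝ᵥ γ) • p - (p ⬝ᵥ γ) • γ) ⬝ᵥ ((γ ⬝ᵥ γ) • p - (p ⬝ᵥ γ) • γ) =
      (γ ⬝ᵥ γ) * gramDet p γ := by
    simp only [gramDet, sub_dotProduct, dotProduct_sub, smul_dotProduct, dotProduct_smul,
      smul_eq_mul, dotProduct_comm γ p]
    ring
  exact pos_of_mul_pos_right (hww ▸ dotProduct_self_pos hw) hγ.le

theorem gramDet₃_nonneg (hΔ : 0 < gramDet p γ) : 0 ≤ gramDet₃ p γ a := by
  have := dotProduct_self_nonneg (gramResidual p γ a)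
  rwa [gramResidual_dotProduct_self, mul_nonneg_iff_of_pos_left hΔ] at this

theorem gramDet_smul_eq_of_gramDet₃_eq_zero (h : gramDet₃ p γ a = 0) :
    gramDet p γ • a =
      ((γ ⬝ᵥ γ) * (p ⬝ᵥ a) - (p ⬝ᵥ γ) * (γ ⬝ᵥ a)) • p +
        ((p ⬝ᵥ p) * (γ ⬝ᵥ a) - (p ⬝ᵥ γ) * (p ⬝ᵥ a)) • γ := by
  have : gramResidual p γ a ⬝ᵥ gramResidual p γ a = 0 := by
    rw [gramResidual_dotProduct_self, h, mul_zero]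
  exact sub_eq_zero.1 (dotProduct_self_eq_zero.1 this)

theorem gramDet₃_of_dotProduct_self_eq_one (ha : a ⬝ᵥ a = 1) :
    gramDet₃ p γ a = (p ⬝ᵥ p) * (γ ⬝ᵥ γ) - (p ⬝ᵥ γ) ^ 2 -
      ((γ ⬝ᵥ γ) * (p ⬝ᵥ a) ^ 2 - 2 * (p ⬝ᵥ γ) * (p ⬝ᵥ a) * (γ ⬝ᵥ a) + (p ⬝ᵥ p) * (γ ⬝ᵥ a) ^ 2) := by
  rw [gramDet₃, gramDet, ha, mul_one]

theorem gramDet₃_nonneg_of_dotProduct_self_eq_one (hΔ : 0 < gramDet p γ) (ha : a ⬝ᵥ a = 1) :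
    0 ≤ (p ⬝ᵥ p) * (γ ⬝ᵥ γ) - (p ⬝ᵥ γ) ^ 2 -
      ((γ ⬝ᵥ γ) * (p ⬝ᵥ a) ^ 2 - 2 * (p ⬝ᵥ γ) * (p ⬝ᵥ a) * (γ ⬝ᵥ a) + (p ⬝ᵥ p) * (γ ⬝ᵥ a) ^ 2) :=
  gramDet₃_of_dotProduct_self_eq_one ha ▸ gramDet₃_nonneg hΔ

theorem mul_one_add_sub_sq_pos (hΔ : 0 < gramDet p γ) :
    0 < (p ⬝ᵥ p) * (1 + γ ⬝ᵥ γ) - (p ⬝ᵥ γ) ^ 2 := by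
  unfold gramDet at hΔ
  linarith [dotProduct_self_nonneg p]

theorem mul_one_add_sq_sub_sq_mul_pos (hΔ : 0 < gramDet p γ) :
    0 < (p ⬝ᵥ p) * (1 + γ ⬝ᵥ γ) ^ 2 - (p ⬝ᵥ γ) ^ 2 * (2 + γ ⬝ᵥ γ) := by
  have h : (p ⬝ᵥ p) * (1 + γ ⬝ᵥ γ) ^ 2 - (p ⬝ᵥ γ) ^ 2 * (2 + γ ⬝ᵥ γ) =
      p ⬝ᵥ p + (2 + γ ⬝ᵥ γ) * gramDet p γ := by
    unfold gramDet; ring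
  have := dotProduct_self_nonneg p
  have := dotProduct_self_nonneg γ
  rw [h]
  positivity

end Gram

section TiltedBound

variable {P G C u v : ℝ}

theorem tilted_identity :
    (P * G - C ^ 2) * ((P * (1 + G) - C ^ 2) * (1 + v ^ 2) - (1 + G) * u ^ 2) =
      (C * u - (P * (1 + G) - C ^ 2) * v) ^ 2 +
        (P * (1 + G) - C ^ 2) * (P * G - C ^ 2 - (G * u ^ 2 - 2 * C * u * v + P * v ^ 2)) := by
  ring

theorem one_add_mul_sq_le (hP : 0 ≤ P) (hΔ : 0 < P * G - C ^ 2)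
    (hQ : 0 ≤ P * G - C ^ 2 - (G * u ^ 2 - 2 * C * u * v + P * v ^ 2)) :
    (1 + G) * u ^ 2 ≤ (P * (1 + G) - C ^ 2) * (1 + v ^ 2) := by
  have hE : 0 ≤ P * (1 + G) - C ^ 2 := by linarith
  have h : 0 ≤ (P * G - C ^ 2) * ((P * (1 + G) - C ^ 2) * (1 + v ^ 2) - (1 + G) * u ^ 2) := by
    rw [tilted_identity]; positivity
  linarith [(mul_nonneg_iff_of_pos_left hΔ).1 h]

theorem eq_of_one_add_mul_sq_eq (hP : 0 ≤ P) (hΔ : 0 < P * G - C ^ 2)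
    (hQ : 0 ≤ P * G - C ^ 2 - (G * u ^ 2 - 2 * C * u * v + P * v ^ 2))
    (heq : (1 + G) * u ^ 2 = (P * (1 + G) - C ^ 2) * (1 + v ^ 2)) :
    C * u = (P * (1 + G) - C ^ 2) * v ∧
      P * G - C ^ 2 - (G * u ^ 2 - 2 * C * u * v + P * v ^ 2) = 0 := by
  have hE : 0 < P * (1 + G) - C ^ 2 := by linarith
  have h := tilted_identity (P := P) (G := G) (C := C) (u := u) (v := v)
  rw [heq, sub_self, mul_zero, eq_comm,
    add_eq_zero_iff_of_nonneg (sq_nonneg _) (mul_nonneg hE.le hQ), sq_eq_zero_iff,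
    sub_eq_zero, mul_eq_zero] at h
  exact ⟨h.1, h.2.resolve_left hE.ne'⟩

end TiltedBound

section SphereRatio

variable {ι : Type*} [Fintype ι] {p γ a b : ι → ℝ}

noncomputable def dotRatio (p γ a : ι → ℝ) : ℝ := (p ⬝ᵥ a) / √(1 + (γ ⬝ᵥ a) ^ 2)

noncomputable def minDotRatio (p γ : ι → ℝ) : ℝ :=
  -√(((p ⬝ᵥ p) * (1 + γ ⬝ᵥ γ) - (p ⬝ᵥ γ) ^ 2) / (1 + γ ⬝ᵥ γ))

noncomputable def sphereMinimizer (p γ : ι → ℝ) : ι → ℝ :=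
  -(√((p ⬝ᵥ p) * (1 + γ ⬝ᵥ γ) ^ 2 - (p ⬝ᵥ γ) ^ 2 * (2 + γ ⬝ᵥ γ)))⁻¹ •
    ((1 + γ ⬝ᵥ γ) • p - (p ⬝ᵥ γ) • γ)

theorem sq_dotRatio (p γ a : ι → ℝ) :
    dotRatio p γ a ^ 2 = (p ⬝ᵥ a) ^ 2 / (1 + (γ ⬝ᵥ a) ^ 2) := by
  rw [dotRatio, div_pow, sq_sqrt (by positivity)]

theorem minDotRatio_le_dotRatio (hΔ : 0 < gramDet p γ) (ha : a ⬝ᵥ a = 1) :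
    minDotRatio p γ ≤ dotRatio p γ a := by
  have hG := dotProduct_self_nonneg γ
  have hsq : dotRatio p γ a ^ 2 ≤ ((p ⬝ᵥ p) * (1 + γ ⬝ᵥ γ) - (p ⬝ᵥ γ) ^ 2) / (1 + γ ⬝ᵥ γ) := by
    rw [sq_dotRatio, div_le_div_iff₀ (by positivity) (by positivity), mul_comm]
    exact one_add_mul_sq_le (dotProduct_self_nonneg p) hΔ
      (gramDet₃_nonneg_of_dotProduct_self_eq_one hΔ ha)
  exact neg_le_of_abs_le (abs_le_sqrt hsq)

theorem dotProduct_constraints_of_dotRatio_eq_minDotRatio (hΔ : 0 < gramDet p γ)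
    (ha : a ⬝ᵥ a = 1) (h : dotRatio p γ a = minDotRatio p γ) :
    p ⬝ᵥ a < 0 ∧
      (p ⬝ᵥ a) ^ 2 * ((p ⬝ᵥ p) * (1 + γ ⬝ᵥ γ) ^ 2 - (p ⬝ᵥ γ) ^ 2 * (2 + γ ⬝ᵥ γ)) =
        ((p ⬝ᵥ p) * (1 + γ ⬝ᵥ γ) - (p ⬝ᵥ γ) ^ 2) ^ 2 ∧
      (p ⬝ᵥ γ) * (p ⬝ᵥ a) = ((p ⬝ᵥ p) * (1 + γ ⬝ᵥ γ) - (p ⬝ᵥ γ) ^ 2) * (γ ⬝ᵥ a) ∧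
      gramDet₃ p γ a = 0 := by
  have hG := dotProduct_self_nonneg γ
  have hE := mul_one_add_sub_sq_pos hΔ
  have hneg : dotRatio p γ a < 0 := h ▸ neg_lt_zero.2 (sqrt_pos.2 (by positivity))
  have hu : p ⬝ᵥ a < 0 := by
    by_contra! h0
    exact hneg.not_ge (div_nonneg h0 (sqrt_nonneg _))
  have heq : (1 + γ ⬝ᵥ γ) * (p ⬝ᵥ a) ^ 2 =
      ((p ⬝ᵥ p) * (1 + γ ⬝ᵥ γ) - (p ⬝ᵥ γ) ^ 2) * (1 + (γ ⬝ᵥ a) ^ 2) := by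
    have := congrArg (· ^ 2) h
    rw [sq_dotRatio, minDotRatio, neg_sq, sq_sqrt (div_pos hE (by positivity)).le,
      div_eq_div_iff (by positivity) (by positivity)] at this
    linarith
  obtain ⟨hC, h₃⟩ := eq_of_one_add_mul_sq_eq (dotProduct_self_nonneg p) hΔ
    (gramDet₃_nonneg_of_dotProduct_self_eq_one hΔ ha) heq
  refine ⟨hu, ?_, hC, (gramDet₃_of_dotProduct_self_eq_one ha).trans h₃⟩
  linear_combination ((p ⬝ᵥ p) * (1 + γ ⬝ᵥ γ) - (p ⬝ᵥ γ) ^ 2) * heq -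
    ((p ⬝ᵥ γ) * (p ⬝ᵥ a) + ((p ⬝ᵥ p) * (1 + γ ⬝ᵥ γ) - (p ⬝ᵥ γ) ^ 2) * (γ ⬝ᵥ a)) * hC

theorem eq_of_dotRatio_eq_minDotRatio (hΔ : 0 < gramDet p γ) (ha : a ⬝ᵥ a = 1)
    (hb : b ⬝ᵥ b = 1) (hfa : dotRatio p γ a = minDotRatio p γ)
    (hfb : dotRatio p γ b = minDotRatio p γ) : a = b := by
  obtain ⟨hua, hDa, hCa, h₃a⟩ := dotProduct_constraints_of_dotRatio_eq_minDotRatio hΔ ha hfa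
  obtain ⟨hub, hDb, hCb, h₃b⟩ := dotProduct_constraints_of_dotRatio_eq_minDotRatio hΔ hb hfb
  have hu : p ⬝ᵥ a = p ⬝ᵥ b := by
    have := mul_right_cancel₀ (mul_one_add_sq_sub_sq_mul_pos hΔ).ne' (hDa.trans hDb.symm)
    exact (sq_eq_sq_iff_eq_or_eq_neg.1 this).resolve_right fun h => by linarith
  have hv : γ ⬝ᵥ a = γ ⬝ᵥ b :=
    mul_left_cancel₀ (mul_one_add_sub_sq_pos hΔ).ne' (hCa.symm.trans (hu ▸ hCb))
  apply smul_right_injective (ι → ℝ) hΔ.ne'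
  simp only [gramDet_smul_eq_of_gramDet₃_eq_zero h₃a, gramDet_smul_eq_of_gramDet₃_eq_zero h₃b,
    hu, hv]

theorem dotProduct_self_sphereMinimizer (hΔ : 0 < gramDet p γ) :
    sphereMinimizer p γ ⬝ᵥ sphereMinimizer p γ = 1 := by
  have hD := mul_one_add_sq_sub_sq_mul_pos hΔ
  have hw : ((1 + γ ⬝ᵥ γ) • p - (p ⬝ᵥ γ) • γ) ⬝ᵥ ((1 + γ ⬝ᵥ γ) • p - (p ⬝ᵥ γ) • γ) =
      (p ⬝ᵥ p) * (1 + γ ⬝ᵥ γ) ^ 2 - (p ⬝ᵥ γ) ^ 2 * (2 + γ ⬝ᵥ γ) := by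
    simp only [sub_dotProduct, dotProduct_sub, smul_dotProduct, dotProduct_smul, smul_eq_mul,
      dotProduct_comm γ p]
    ring
  rw [sphereMinimizer, smul_dotProduct, dotProduct_smul, hw, smul_eq_mul, smul_eq_mul]
  field_simp
  rw [sq_sqrt hD.le]

theorem dotRatio_sphereMinimizer (hΔ : 0 < gramDet p γ) :
    dotRatio p γ (sphereMinimizer p γ) = minDotRatio p γ := by
  have hD := mul_one_add_sq_sub_sq_mul_pos hΔ
  have hE := mul_one_add_sub_sq_pos hΔ
  have hG := dotProduct_self_nonneg γ
  have hu : p ⬝ᵥ sphereMinimizer p γ =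
      -(((p ⬝ᵥ p) * (1 + γ ⬝ᵥ γ) - (p ⬝ᵥ γ) ^ 2) /
        √((p ⬝ᵥ p) * (1 + γ ⬝ᵥ γ) ^ 2 - (p ⬝ᵥ γ) ^ 2 * (2 + γ ⬝ᵥ γ))) := by
    simp only [sphereMinimizer, dotProduct_smul, dotProduct_sub, smul_eq_mul]
    field_simp
  have hv : γ ⬝ᵥ sphereMinimizer p γ =
      -((p ⬝ᵥ γ) / √((p ⬝ᵥ p) * (1 + γ ⬝ᵥ γ) ^ 2 - (p ⬝ᵥ γ) ^ 2 * (2 + γ ⬝ᵥ γ))) := by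
    simp only [sphereMinimizer, dotProduct_smul, dotProduct_sub, smul_eq_mul, dotProduct_comm γ p]
    field_simp
    ring
  have hneg : dotRatio p γ (sphereMinimizer p γ) < 0 := by
    rw [dotRatio, hu]
    exact div_neg_of_neg_of_pos (neg_neg_of_pos (div_pos hE (sqrt_pos.2 hD)))
      (sqrt_pos.2 (by positivity))
  have hsq : dotRatio p γ (sphereMinimizer p γ) ^ 2 =
      ((p ⬝ᵥ p) * (1 + γ ⬝ᵥ γ) - (p ⬝ᵥ γ) ^ 2) / (1 + γ ⬝ᵥ γ) := by
    rw [sq_dotRatio, hu, hv, neg_sq, neg_sq, div_pow, div_pow, sq_sqrt hD.le]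
    field_simp
    ring
  rw [minDotRatio, ← hsq, sqrt_sq_eq_abs, abs_of_neg hneg, neg_neg]

end SphereRatio

/-- For linearly independent `p, γ ∈ ℝⁿ`, the minimizer of
`f(a) = ⟨p,a⟩/√(1+⟨γ,a⟩²)` over the unit sphere is
`a* = -((1+|γ|²)p - ⟨p,γ⟩γ)/√(|p|²(1+|γ|²)² - ⟨p,γ⟩²(2+|γ|²))`. -/
theorem stmt5 (n : ℕ) (p γ : Fin n → ℝ)
    (hind : LinearIndependent ℝ ![p, γ])
    (f : (Fin n → ℝ) → ℝ)
    (hf : ∀ a, f a = (p ⬝ᵥ a) / Real.sqrt (1 + (γ ⬝ᵥ a) ^ 2))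
    (astar : Fin n → ℝ)
    (hastar : astar =
      -(Real.sqrt ((p ⬝ᵥ p) * (1 + γ ⬝ᵥ γ) ^ 2 - (p ⬝ᵥ γ) ^ 2 * (2 + γ ⬝ᵥ γ)))⁻¹ •
        ((1 + γ ⬝ᵥ γ) • p - (p ⬝ᵥ γ) • γ)) :
    astar ⬝ᵥ astar = 1 ∧
    (∀ a : Fin n → ℝ, a ⬝ᵥ a = 1 → f astar ≤ f a) ∧
    (∀ a : Fin n → ℝ, a ⬝ᵥ a = 1 → f a = f astar → a = astar) := by
  have hΔ := gramDet_pos hind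
  obtain rfl : f = dotRatio p γ := funext hf
  obtain rfl : astar = sphereMinimizer p γ := hastar
  have hmin := dotRatio_sphereMinimizer hΔ
  have hunit := dotProduct_self_sphereMinimizer hΔ
  refine ⟨hunit, fun a ha => hmin ▸ minDotRatio_le_dotRatio hΔ ha, fun a ha heq => ?_⟩
  exact eq_of_dotRatio_eq_minDotRatio hΔ ha hunit (heq.trans hmin) hmin
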